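/- There exists a counterexample to the soundness of the fixed-point rule in arbitrary nominal sets: in the nominal set P_fin(𝔸) with distinct atoms a₁, a₂, a₃, a₄, the element x = {a₁, a₂} satisfies (a₁ a₂) · x = x and (a₃ a₄) · x = x, and dom((a₁ a₃)) ⊆ dom((a₁ a₂)) ∪ dom((a₃ a₄)), yet (a₁ a₃) · x ≠ x. -/

import Mathlib

/-- Atoms: a countably infinite set. -/
abbrev Atom := ℕ

/-- The subgroup of permutations of atoms with finite domain. -/
def finPermSubgroup : Subgroup (Equiv.Perm Atom) where
  carrier := {π | {a | π a ≠ a}.Finite}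
  one_mem' := by simp
  mul_mem' := by
    intro π σ hπ hσ
    refine (hπ.union hσ).subset ?_
    intro a ha
    by_contra h
    simp only [Set.mem_union, Set.mem_setOf_eq, not_or, not_not] at h
    apply ha
    show π (σ a) = a
    rw [h.2, h.1]
  inv_mem' := by
    intro π hπ
    refine hπ.subset ?_
    intro a ha h
    apply ha
    show π⁻¹ a = a
    conv_lhs => rw [← h]
    exact π.symm_apply_apply a

/-- Finite-domain permutations of atoms. -/
abbrev FinPerm := ↥finPermSubgroup

/-- The transposition of two atoms, as a finite-domain permutation. -/
def fswap (a b : Atom) : FinPerm :=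
  ⟨Equiv.swap a b, (Set.finite_singleton a |>.insert b).subset (by
    intro x hx
    simp only [Set.mem_setOf_eq] at hx
    by_contra h
    simp only [Set.mem_insert_iff, Set.mem_singleton_iff, not_or] at h
    exact hx (Equiv.swap_apply_of_ne_of_ne h.2 h.1))⟩

/-- The domain of a finite-domain permutation. -/
def pdom (π : FinPerm) : Set Atom := {a | π.val a ≠ a}

section
variable {X : Type*} [MulAction FinPerm X]

/-- B supports x. -/
def Supports (B : Set Atom) (x : X) : Prop :=
  ∀ π : FinPerm, (∀ a ∈ B, π.val a = a) → π • x = x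

/-- B strongly supports x. -/
def StronglySupports (B : Set Atom) (x : X) : Prop :=
  ∀ π : FinPerm, π • x = x ↔ (∀ a ∈ B, π.val a = a)

/-- The (least) support of x: intersection of all finite supporting sets. -/
def supp (x : X) : Set Atom :=
  ⋂₀ {B : Set Atom | B.Finite ∧ Supports B x}

/-- A Perm(𝔸)-set is nominal when every element has a finite support. -/
def Nominal (X : Type*) [MulAction FinPerm X] : Prop :=
  ∀ x : X, ∃ B : Set Atom, B.Finite ∧ Supports B x

/-- A Perm(𝔸)-set is a strong nominal set when every element is strongly
supported by a finite set. -/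
def StrongNominal (X : Type*) [MulAction FinPerm X] : Prop :=
  ∀ x : X, ∃ B : Set Atom, B.Finite ∧ StronglySupports B x

end

instance : MulAction FinPerm (Finset Atom) where
  smul π B := B.image π.val
  one_smul B := by
    show B.image _ = B
    simp
  mul_smul π σ B := by
    show B.image _ = (B.image _).image _
    rw [Finset.image_image]
    rfl

theorem FinPerm.smul_finset_def (π : FinPerm) (s : Finset Atom) : π • s = s.image π.val := rfl

theorem pdom_fswap {a b : Atom} (hab : a ≠ b) : pdom (fswap a b) = {a, b} := by
  ext x
  simp [pdom, fswap, Equiv.swap_apply_ne_self_iff, hab]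

theorem mem_fswap_smul_finset {a b x : Atom} {s : Finset Atom} :
    x ∈ fswap a b • s ↔ Equiv.swap a b x ∈ s := by
  simp only [FinPerm.smul_finset_def, fswap, Finset.mem_image]
  exact ⟨by rintro ⟨y, hy, rfl⟩; simpa, fun h => ⟨_, h, Equiv.swap_apply_self a b x⟩⟩

theorem fswap_smul_finset_eq_self_iff {a b : Atom} {s : Finset Atom} :
    fswap a b • s = s ↔ (a ∈ s ↔ b ∈ s) := by
  constructor
  · intro h
    conv_lhs => rw [← h]
    rw [mem_fswap_smul_finset, Equiv.swap_apply_left]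
  · intro h
    ext x
    rw [mem_fswap_smul_finset]
    rcases eq_or_ne x a with rfl | hxa
    · rw [Equiv.swap_apply_left, h]
    rcases eq_or_ne x b with rfl | hxb
    · rw [Equiv.swap_apply_right, h]
    · rw [Equiv.swap_apply_of_ne_of_ne hxa hxb]

theorem stmt9 (a₁ a₂ a₃ a₄ : Atom)
    (h12 : a₁ ≠ a₂) (h13 : a₁ ≠ a₃) (h14 : a₁ ≠ a₄)
    (h23 : a₂ ≠ a₃) (h24 : a₂ ≠ a₄) (h34 : a₃ ≠ a₄) :
    fswap a₁ a₂ • ({a₁, a₂} : Finset Atom) = {a₁, a₂} ∧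
    fswap a₃ a₄ • ({a₁, a₂} : Finset Atom) = {a₁, a₂} ∧
    pdom (fswap a₁ a₃) ⊆ pdom (fswap a₁ a₂) ∪ pdom (fswap a₃ a₄) ∧
    fswap a₁ a₃ • ({a₁, a₂} : Finset Atom) ≠ {a₁, a₂} := by
  simp only [ne_eq, fswap_smul_finset_eq_self_iff, pdom_fswap h12, pdom_fswap h13,
    pdom_fswap h34]
  refine ⟨by simp, ?_, ?_, ?_⟩
  · simp [h13.symm, h14.symm, h23.symm, h24.symm]
  · simp [Set.insert_subset_iff]
  · simp [h13.symm, h23.symm]
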